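/- arXiv:1905.05417 — 2 statements merged into one kernel-verified Lean document; each statement's English description precedes it below -/
import Mathlib

section
/- Grouping by distinct materials: the number of required 2D integrals is independent of the number of layers. In the setting of the laminate stiffness factorization, assume additionally that the layer materials take at most m̄ distinct values: there is a map c : {1,…,m} → {1,…,m̄} and continuous maps D̄₁, …, D̄_{m̄} : Ω̄ → ℝ^{6×6} with D_l = D̄_{c(l)} for every layer l. Then K = Σ_{k=1}^{m̄} Σ_{α,β ∈ {1,2}} P̄_{k,αβ} · ( Σ_{l : c(l)=k} Q_{l,αβ} ), where P̄_{k,αβ} = ∫_{Ω̄} A_αⁱᵀ D̄_k A_βʲ J dξ̄ and Q_{l,αβ} = ∫_{h_l} Tᵢ^{(α-1)} Tⱼ^{(β-1)} dt. Hence only 4·m̄ in-plane integrals P̄_{k,αβ} are needed, regardless of the total number m of layers. -/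
open MeasureTheory Matrix

/-- Entrywise (Bochner) integral of a matrix-valued function. -/
noncomputable def matInt {α : Type*} [MeasurableSpace α] (μ : Measure α)
    {n m : Type*} (f : α → Matrix n m ℝ) : Matrix n m ℝ :=
  Matrix.of fun i j => ∫ x, f x i j ∂μ

/-- The in-plane parametric domain `Ω̄ = [0,1]²`. -/
def inPlaneSq : Set (ℝ × ℝ) := Set.Icc (0:ℝ) 1 ×ˢ Set.Icc (0:ℝ) 1

section llsfgAux

theorem llsfg_tchain (t : ℕ → ℝ) (n : ℕ) (h : ∀ l < n, t l ≤ t (l + 1)) :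
    ∀ b ≤ n, ∀ a ≤ b, t a ≤ t b := by
  intro b
  induction b with
  | zero => intro _ a ha; rw [Nat.le_zero.mp ha]
  | succ k ih =>
    intro hb a ha
    rcases Nat.le_succ_iff.mp ha with h1 | h1
    · exact le_trans (ih (le_trans (Nat.le_succ k) hb) a h1)
        (h k (Nat.lt_of_lt_of_le (Nat.lt_succ_self k) hb))
    · rw [h1]

theorem llsfg_iocUnion (t : ℕ → ℝ) (n : ℕ) (h : ∀ l < n, t l ≤ t (l + 1)) :
    Set.Ioc (t 0) (t n) = ⋃ l ∈ Finset.range n, Set.Ioc (t l) (t (l + 1)) := by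
  induction n with
  | zero => simp
  | succ k ih =>
    have h' : ∀ l < k, t l ≤ t (l + 1) := fun l hl => h l (Nat.lt_succ_of_lt hl)
    have hle : t 0 ≤ t k := llsfg_tchain t k h' k le_rfl 0 (Nat.zero_le k)
    rw [Finset.range_add_one, Finset.set_biUnion_insert, ← ih h', Set.union_comm,
      Set.Ioc_union_Ioc_eq_Ioc hle (h k (Nat.lt_succ_self k))]

theorem llsfg_expand_entry (M M' N N' : Matrix (Fin 6) (Fin 3) ℝ) (D : Matrix (Fin 6) (Fin 6) ℝ)
    (a a' b b' jv : ℝ) (i j : Fin 3) :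
    jv * (((a • M + a' • M')ᵀ * D * (b • N + b' • N')) i j)
      = (jv * ((Mᵀ * D * N) i j)) * (a * b) + (jv * ((Mᵀ * D * N') i j)) * (a * b')
        + (jv * ((M'ᵀ * D * N) i j)) * (a' * b) + (jv * ((M'ᵀ * D * N') i j)) * (a' * b') := by
  simp only [transpose_add, transpose_smul, Matrix.add_mul, Matrix.mul_add, Matrix.smul_mul,
    Matrix.mul_smul, Matrix.add_apply, Matrix.smul_apply, smul_eq_mul]
  ring

theorem llsfg_entry_cont (S : Set (ℝ × ℝ)) (J : ℝ × ℝ → ℝ) (hJ : ContinuousOn J S)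
    (A B : ℝ × ℝ → Matrix (Fin 6) (Fin 3) ℝ) (D : ℝ × ℝ → Matrix (Fin 6) (Fin 6) ℝ)
    (hA : ContinuousOn A S) (hB : ContinuousOn B S) (hD : ContinuousOn D S) (i j : Fin 3) :
    ContinuousOn (fun ξ => J ξ * ((A ξ)ᵀ * D ξ * B ξ) i j) S := by
  have hAe : ∀ a b, ContinuousOn (fun ξ => A ξ a b) S := fun a b =>
    (continuous_apply b).comp_continuousOn ((continuous_apply a).comp_continuousOn hA)
  have hBe : ∀ a b, ContinuousOn (fun ξ => B ξ a b) S := fun a b =>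
    (continuous_apply b).comp_continuousOn ((continuous_apply a).comp_continuousOn hB)
  have hDe : ∀ a b, ContinuousOn (fun ξ => D ξ a b) S := fun a b =>
    (continuous_apply b).comp_continuousOn ((continuous_apply a).comp_continuousOn hD)
  simp only [Matrix.mul_apply, Matrix.transpose_apply, Finset.sum_mul]
  exact hJ.mul <| continuousOn_finset_sum _ fun a _ =>
    continuousOn_finset_sum _ fun b _ => ((hAe b i).mul (hDe b a)).mul (hBe a j)

theorem llsfg_ae_layer (μ : Measure (ℝ × ℝ)) [SFinite μ] (a b : ℝ) (hab : a ≤ b)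
    (F G : (ℝ × ℝ) × ℝ → ℝ)
    (hFG : ∀ ξ s, s ∈ Set.Ioo a b → F (ξ, s) = G (ξ, s)) :
    F =ᵐ[μ.prod (volume.restrict (Set.Icc a b))] G := by
  apply ae_iff.mpr
  apply measure_mono_null (t := Set.univ ×ˢ (Set.Ioo a b)ᶜ)
  · intro p hp
    refine ⟨trivial, fun hs => ?_⟩
    exact hp (by simpa using hFG p.1 p.2 hs)
  · rw [Measure.prod_prod]
    have h0 : (volume.restrict (Set.Icc a b)) (Set.Ioo a b)ᶜ = 0 := by
      rw [Measure.restrict_apply measurableSet_Ioo.compl, Set.inter_comm, ← Set.diff_eq,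
        Set.Icc_diff_Ioo_same hab]
      exact (Set.finite_singleton b |>.insert a).measure_zero _
    rw [h0, mul_zero]

/-- Scalar core: splitting the 3D integral over layers and factorizing each layer. -/
theorem llsfg_scalar_main (m : ℕ) (t : ℕ → ℝ) (hmono : ∀ l < m, t l < t (l + 1))
    (Ω : Set (ℝ × ℝ)) (hΩ : MeasurableSet Ω)
    (F : (ℝ × ℝ) × ℝ → ℝ)
    (v11 v12 v21 v22 : ℕ → ℝ × ℝ → ℝ) (g11 g12 g21 g22 : ℝ → ℝ)
    (hv11 : ∀ l < m, Integrable (v11 l) (volume.restrict Ω))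
    (hv12 : ∀ l < m, Integrable (v12 l) (volume.restrict Ω))
    (hv21 : ∀ l < m, Integrable (v21 l) (volume.restrict Ω))
    (hv22 : ∀ l < m, Integrable (v22 l) (volume.restrict Ω))
    (hg11 : Continuous g11) (hg12 : Continuous g12)
    (hg21 : Continuous g21) (hg22 : Continuous g22)
    (hF : ∀ l < m, ∀ ξ s, s ∈ Set.Ioo (t l) (t (l + 1)) →
      F (ξ, s) = v11 l ξ * g11 s + v12 l ξ * g12 s + v21 l ξ * g21 s + v22 l ξ * g22 s) :
    ∫ p in Ω ×ˢ Set.Icc (t 0) (t m), F p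
      = ∑ l ∈ Finset.range m,
          ((∫ ξ in Ω, v11 l ξ) * (∫ s in Set.Icc (t l) (t (l + 1)), g11 s)
          + (∫ ξ in Ω, v12 l ξ) * (∫ s in Set.Icc (t l) (t (l + 1)), g12 s)
          + (∫ ξ in Ω, v21 l ξ) * (∫ s in Set.Icc (t l) (t (l + 1)), g21 s)
          + (∫ ξ in Ω, v22 l ξ) * (∫ s in Set.Icc (t l) (t (l + 1)), g22 s)) := by
  have hmono' : ∀ l < m, t l ≤ t (l + 1) := fun l hl => (hmono l hl).le
  -- the per-layer computation
  have layer : ∀ l < m,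
      Integrable F ((volume.restrict Ω).prod (volume.restrict (Set.Icc (t l) (t (l + 1))))) ∧
      ∫ p, F p ∂((volume.restrict Ω).prod (volume.restrict (Set.Icc (t l) (t (l + 1)))))
        = (∫ ξ in Ω, v11 l ξ) * (∫ s in Set.Icc (t l) (t (l + 1)), g11 s)
          + (∫ ξ in Ω, v12 l ξ) * (∫ s in Set.Icc (t l) (t (l + 1)), g12 s)
          + (∫ ξ in Ω, v21 l ξ) * (∫ s in Set.Icc (t l) (t (l + 1)), g21 s)
          + (∫ ξ in Ω, v22 l ξ) * (∫ s in Set.Icc (t l) (t (l + 1)), g22 s) := by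
    intro l hl
    have hab := hmono' l hl
    have hae : F =ᵐ[(volume.restrict Ω).prod (volume.restrict (Set.Icc (t l) (t (l + 1))))]
        fun p => v11 l p.1 * g11 p.2 + v12 l p.1 * g12 p.2
          + v21 l p.1 * g21 p.2 + v22 l p.1 * g22 p.2 :=
      llsfg_ae_layer _ _ _ hab _ _ (fun ξ s hs => hF l hl ξ s hs)
    have i1 : Integrable (fun p : (ℝ × ℝ) × ℝ => v11 l p.1 * g11 p.2)
        ((volume.restrict Ω).prod (volume.restrict (Set.Icc (t l) (t (l + 1))))) :=
      (hv11 l hl).mul_prod hg11.integrableOn_Icc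
    have i2 : Integrable (fun p : (ℝ × ℝ) × ℝ => v12 l p.1 * g12 p.2)
        ((volume.restrict Ω).prod (volume.restrict (Set.Icc (t l) (t (l + 1))))) :=
      (hv12 l hl).mul_prod hg12.integrableOn_Icc
    have i3 : Integrable (fun p : (ℝ × ℝ) × ℝ => v21 l p.1 * g21 p.2)
        ((volume.restrict Ω).prod (volume.restrict (Set.Icc (t l) (t (l + 1))))) :=
      (hv21 l hl).mul_prod hg21.integrableOn_Icc
    have i4 : Integrable (fun p : (ℝ × ℝ) × ℝ => v22 l p.1 * g22 p.2)
        ((volume.restrict Ω).prod (volume.restrict (Set.Icc (t l) (t (l + 1))))) :=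
      (hv22 l hl).mul_prod hg22.integrableOn_Icc
    have i12 : Integrable (fun p : (ℝ × ℝ) × ℝ => v11 l p.1 * g11 p.2 + v12 l p.1 * g12 p.2)
        ((volume.restrict Ω).prod (volume.restrict (Set.Icc (t l) (t (l + 1))))) := i1.add i2
    have i123 : Integrable (fun p : (ℝ × ℝ) × ℝ =>
        v11 l p.1 * g11 p.2 + v12 l p.1 * g12 p.2 + v21 l p.1 * g21 p.2)
        ((volume.restrict Ω).prod (volume.restrict (Set.Icc (t l) (t (l + 1))))) := i12.add i3
    have hGint : Integrable (fun p : (ℝ × ℝ) × ℝ =>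
        v11 l p.1 * g11 p.2 + v12 l p.1 * g12 p.2 + v21 l p.1 * g21 p.2 + v22 l p.1 * g22 p.2)
        ((volume.restrict Ω).prod (volume.restrict (Set.Icc (t l) (t (l + 1))))) := i123.add i4
    refine ⟨hGint.congr hae.symm, ?_⟩
    rw [integral_congr_ae hae, integral_add i123 i4, integral_add i12 i3, integral_add i1 i2,
      integral_prod_mul, integral_prod_mul, integral_prod_mul, integral_prod_mul]
  -- splitting the integral over layers
  have hioc : Set.Ioc (t 0) (t m) = ⋃ l ∈ Finset.range m, Set.Ioc (t l) (t (l + 1)) :=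
    llsfg_iocUnion t m hmono'
  rw [show (volume : Measure ((ℝ × ℝ) × ℝ)) = (volume : Measure (ℝ × ℝ)).prod volume from
      Measure.volume_eq_prod _ _,
    ← Measure.prod_restrict, ← restrict_Ioc_eq_restrict_Icc, hioc,
    Measure.prod_restrict]
  simp only [Set.prod_iUnion]
  rw [integral_biUnion_finset (Finset.range m)
    (fun l _ => hΩ.prod measurableSet_Ioc)
    (by
      have key : ∀ a b : ℕ, a < b → b < m →
          Disjoint (Set.Ioc (t a) (t (a + 1))) (Set.Ioc (t b) (t (b + 1))) := by
        intro a b hab hbm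
        apply Set.Ioc_disjoint_Ioc.mpr
        have : t (a + 1) ≤ t b := llsfg_tchain t m hmono' b hbm.le (a + 1) hab
        exact le_trans (min_le_left _ _) (le_trans this (le_max_right _ _))
      intro x hx y hy hxy
      have hdisj : Disjoint (Set.Ioc (t x) (t (x + 1))) (Set.Ioc (t y) (t (y + 1))) := by
        rcases Nat.lt_or_ge x y with h | h
        · exact key x y h (Finset.mem_range.mp hy)
        · exact (key y x (lt_of_le_of_ne h fun e => hxy e.symm) (Finset.mem_range.mp hx)).symm
      exact Set.disjoint_left.mpr fun p hp hq =>
        Set.disjoint_left.mp hdisj hp.2 hq.2)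
    (fun l hl => by
      have h := (layer l (Finset.mem_range.mp hl)).1
      rwa [← restrict_Ioc_eq_restrict_Icc, Measure.prod_restrict] at h)]
  refine Finset.sum_congr rfl fun l hl => ?_
  rw [← Measure.prod_restrict, restrict_Ioc_eq_restrict_Icc]
  exact (layer l (Finset.mem_range.mp hl)).2

end llsfgAux

/-- Grouping by distinct materials: if the layer materials take at most `m̄` distinct
values `D̄ k`, `k < m̄`, via a map `c` (layer `l`, occupying `[t l, t (l+1)]`, has
material `D̄ (c l)`), then the 3D stiffness integral equals a sum over the `m̄` distinct
materials of the corresponding `4·m̄` in-plane 2D integrals, each multiplied by the sum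
of the 1D out-of-plane integrals of the layers carrying that material.  Hence the number
of required 2D integrals is independent of the number `m` of layers. -/
theorem laminate_stiffness_factorization_grouped
    (m mbar : ℕ) (hm : 0 < m) (t : ℕ → ℝ)
    (ht0 : t 0 = 0) (htm : t m = 1) (hmono : ∀ l < m, t l < t (l + 1))
    (A₁i A₂i A₁j A₂j : ℝ × ℝ → Matrix (Fin 6) (Fin 3) ℝ)
    (hA₁i : ContinuousOn A₁i inPlaneSq) (hA₂i : ContinuousOn A₂i inPlaneSq)
    (hA₁j : ContinuousOn A₁j inPlaneSq) (hA₂j : ContinuousOn A₂j inPlaneSq)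
    (J : ℝ × ℝ → ℝ) (hJ : ContinuousOn J inPlaneSq)
    (Ti Tj : ℝ → ℝ) (hTi : ContDiff ℝ 1 Ti) (hTj : ContDiff ℝ 1 Tj)
    -- the distinct materials and the layer-to-material map
    (Dbar : ℕ → ℝ × ℝ → Matrix (Fin 6) (Fin 6) ℝ)
    (hDbar : ∀ k < mbar, ContinuousOn (Dbar k) inPlaneSq)
    (c : ℕ → ℕ) (hc : ∀ l < m, c l < mbar)
    -- the piecewise material: layer `l` has material `D l = Dbar (c l)`
    (Dpw : (ℝ × ℝ) × ℝ → Matrix (Fin 6) (Fin 6) ℝ)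
    (hDpw : ∀ l < m, ∀ ξ : ℝ × ℝ, ∀ s ∈ Set.Ioo (t l) (t (l + 1)),
      Dpw (ξ, s) = Dbar (c l) ξ) :
    matInt (volume.restrict (inPlaneSq ×ˢ Set.Icc (0:ℝ) 1))
        (fun p => J p.1 •
          ((Ti p.2 • A₁i p.1 + deriv Ti p.2 • A₂i p.1)ᵀ * Dpw p *
            (Tj p.2 • A₁j p.1 + deriv Tj p.2 • A₂j p.1)))
      = ∑ k ∈ Finset.range mbar,
          ((∑ l ∈ (Finset.range m).filter (fun l => c l = k),
              ∫ s in Set.Icc (t l) (t (l + 1)), Ti s * Tj s) •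
            matInt (volume.restrict inPlaneSq) (fun ξ => J ξ • ((A₁i ξ)ᵀ * Dbar k ξ * A₁j ξ))
          + (∑ l ∈ (Finset.range m).filter (fun l => c l = k),
              ∫ s in Set.Icc (t l) (t (l + 1)), Ti s * deriv Tj s) •
            matInt (volume.restrict inPlaneSq) (fun ξ => J ξ • ((A₁i ξ)ᵀ * Dbar k ξ * A₂j ξ))
          + (∑ l ∈ (Finset.range m).filter (fun l => c l = k),
              ∫ s in Set.Icc (t l) (t (l + 1)), deriv Ti s * Tj s) •
            matInt (volume.restrict inPlaneSq) (fun ξ => J ξ • ((A₂i ξ)ᵀ * Dbar k ξ * A₁j ξ))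
          + (∑ l ∈ (Finset.range m).filter (fun l => c l = k),
              ∫ s in Set.Icc (t l) (t (l + 1)), deriv Ti s * deriv Tj s) •
            matInt (volume.restrict inPlaneSq) (fun ξ => J ξ • ((A₂i ξ)ᵀ * Dbar k ξ * A₂j ξ))) := by
  have hmono' : ∀ l < m, t l ≤ t (l + 1) := fun l hl => (hmono l hl).le
  have hΩm : MeasurableSet inPlaneSq := measurableSet_Icc.prod measurableSet_Icc
  have hΩc : IsCompact inPlaneSq := isCompact_Icc.prod isCompact_Icc
  have hTi' : Continuous (deriv Ti) := hTi.continuous_deriv le_rfl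
  have hTj' : Continuous (deriv Tj) := hTj.continuous_deriv le_rfl
  ext i j
  have hV : ∀ (A B : ℝ × ℝ → Matrix (Fin 6) (Fin 3) ℝ), ContinuousOn A inPlaneSq →
      ContinuousOn B inPlaneSq → ∀ l < m,
      Integrable (fun ξ => J ξ * ((A ξ)ᵀ * Dbar (c l) ξ * B ξ) i j)
        (volume.restrict inPlaneSq) :=
    fun A B hA hB l hl =>
      (llsfg_entry_cont _ J hJ A B (Dbar (c l)) hA hB (hDbar _ (hc l hl)) i j).integrableOn_compact hΩc
  have key := llsfg_scalar_main m t hmono inPlaneSq hΩm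
    (fun p => J p.1 * (((Ti p.2 • A₁i p.1 + deriv Ti p.2 • A₂i p.1)ᵀ * Dpw p *
      (Tj p.2 • A₁j p.1 + deriv Tj p.2 • A₂j p.1)) i j))
    (fun l ξ => J ξ * ((A₁i ξ)ᵀ * Dbar (c l) ξ * A₁j ξ) i j)
    (fun l ξ => J ξ * ((A₁i ξ)ᵀ * Dbar (c l) ξ * A₂j ξ) i j)
    (fun l ξ => J ξ * ((A₂i ξ)ᵀ * Dbar (c l) ξ * A₁j ξ) i j)
    (fun l ξ => J ξ * ((A₂i ξ)ᵀ * Dbar (c l) ξ * A₂j ξ) i j)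
    (fun s => Ti s * Tj s) (fun s => Ti s * deriv Tj s)
    (fun s => deriv Ti s * Tj s) (fun s => deriv Ti s * deriv Tj s)
    (hV _ _ hA₁i hA₁j) (hV _ _ hA₁i hA₂j) (hV _ _ hA₂i hA₁j) (hV _ _ hA₂i hA₂j)
    (hTi.continuous.mul hTj.continuous) (hTi.continuous.mul hTj')
    (hTi'.mul hTj.continuous) (hTi'.mul hTj')
    (by
      intro l hl ξ s hs
      show J ξ * (((Ti s • A₁i ξ + deriv Ti s • A₂i ξ)ᵀ * Dpw (ξ, s) *
        (Tj s • A₁j ξ + deriv Tj s • A₂j ξ)) i j) = _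
      rw [hDpw l hl ξ s hs]
      exact llsfg_expand_entry (A₁i ξ) (A₂i ξ) (A₁j ξ) (A₂j ξ) (Dbar (c l) ξ)
        (Ti s) (deriv Ti s) (Tj s) (deriv Tj s) (J ξ) i j)
  simp only [matInt, Matrix.of_apply, Matrix.sum_apply, Matrix.add_apply, Matrix.smul_apply,
    smul_eq_mul]
  calc
    _ = ∑ l ∈ Finset.range m,
          ((∫ ξ in inPlaneSq, J ξ * ((A₁i ξ)ᵀ * Dbar (c l) ξ * A₁j ξ) i j) * (∫ s in Set.Icc (t l) (t (l + 1)), Ti s * Tj s)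
          + (∫ ξ in inPlaneSq, J ξ * ((A₁i ξ)ᵀ * Dbar (c l) ξ * A₂j ξ) i j) * (∫ s in Set.Icc (t l) (t (l + 1)), Ti s * deriv Tj s)
          + (∫ ξ in inPlaneSq, J ξ * ((A₂i ξ)ᵀ * Dbar (c l) ξ * A₁j ξ) i j) * (∫ s in Set.Icc (t l) (t (l + 1)), deriv Ti s * Tj s)
          + (∫ ξ in inPlaneSq, J ξ * ((A₂i ξ)ᵀ * Dbar (c l) ξ * A₂j ξ) i j) * (∫ s in Set.Icc (t l) (t (l + 1)), deriv Ti s * deriv Tj s)) := by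
        rw [show Set.Icc (0:ℝ) 1 = Set.Icc (t 0) (t m) from by rw [ht0, htm]]
        exact key
    _ = ∑ k ∈ Finset.range mbar, ∑ l ∈ (Finset.range m).filter (fun l => c l = k),
          ((∫ ξ in inPlaneSq, J ξ * ((A₁i ξ)ᵀ * Dbar (c l) ξ * A₁j ξ) i j) * (∫ s in Set.Icc (t l) (t (l + 1)), Ti s * Tj s)
          + (∫ ξ in inPlaneSq, J ξ * ((A₁i ξ)ᵀ * Dbar (c l) ξ * A₂j ξ) i j) * (∫ s in Set.Icc (t l) (t (l + 1)), Ti s * deriv Tj s)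
          + (∫ ξ in inPlaneSq, J ξ * ((A₂i ξ)ᵀ * Dbar (c l) ξ * A₁j ξ) i j) * (∫ s in Set.Icc (t l) (t (l + 1)), deriv Ti s * Tj s)
          + (∫ ξ in inPlaneSq, J ξ * ((A₂i ξ)ᵀ * Dbar (c l) ξ * A₂j ξ) i j) * (∫ s in Set.Icc (t l) (t (l + 1)), deriv Ti s * deriv Tj s)) :=
        (Finset.sum_fiberwise_of_maps_to
          (fun l hl => Finset.mem_range.mpr (hc l (Finset.mem_range.mp hl))) _).symm
    _ = _ := by
        refine Finset.sum_congr rfl fun k hk => ?_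
        have hsummand : ∀ l ∈ (Finset.range m).filter (fun l => c l = k),
            ((∫ ξ in inPlaneSq, J ξ * ((A₁i ξ)ᵀ * Dbar (c l) ξ * A₁j ξ) i j) * (∫ s in Set.Icc (t l) (t (l + 1)), Ti s * Tj s)
          + (∫ ξ in inPlaneSq, J ξ * ((A₁i ξ)ᵀ * Dbar (c l) ξ * A₂j ξ) i j) * (∫ s in Set.Icc (t l) (t (l + 1)), Ti s * deriv Tj s)
          + (∫ ξ in inPlaneSq, J ξ * ((A₂i ξ)ᵀ * Dbar (c l) ξ * A₁j ξ) i j) * (∫ s in Set.Icc (t l) (t (l + 1)), deriv Ti s * Tj s)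
          + (∫ ξ in inPlaneSq, J ξ * ((A₂i ξ)ᵀ * Dbar (c l) ξ * A₂j ξ) i j) * (∫ s in Set.Icc (t l) (t (l + 1)), deriv Ti s * deriv Tj s))
            = ((∫ ξ in inPlaneSq, J ξ * ((A₁i ξ)ᵀ * Dbar (k) ξ * A₁j ξ) i j) * (∫ s in Set.Icc (t l) (t (l + 1)), Ti s * Tj s)
          + (∫ ξ in inPlaneSq, J ξ * ((A₁i ξ)ᵀ * Dbar (k) ξ * A₂j ξ) i j) * (∫ s in Set.Icc (t l) (t (l + 1)), Ti s * deriv Tj s)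
          + (∫ ξ in inPlaneSq, J ξ * ((A₂i ξ)ᵀ * Dbar (k) ξ * A₁j ξ) i j) * (∫ s in Set.Icc (t l) (t (l + 1)), deriv Ti s * Tj s)
          + (∫ ξ in inPlaneSq, J ξ * ((A₂i ξ)ᵀ * Dbar (k) ξ * A₂j ξ) i j) * (∫ s in Set.Icc (t l) (t (l + 1)), deriv Ti s * deriv Tj s)) := by
          intro l hl
          rw [(Finset.mem_filter.mp hl).2]
        rw [Finset.sum_congr rfl hsummand, Finset.sum_add_distrib, Finset.sum_add_distrib,
          Finset.sum_add_distrib, ← Finset.mul_sum, ← Finset.mul_sum, ← Finset.mul_sum,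
          ← Finset.mul_sum]
        ring
end

section
/- Per-layer factorization of the stiffness integral in bracket ('B-free') form. Let Ω̄ = [0,1]² ⊂ ℝ² and h = [t₀, t₁] ⊂ ℝ with t₀ < t₁. Let Sᵢ, Sⱼ : Ω̄ → ℝ be continuously differentiable, Tᵢ, Tⱼ : ℝ → ℝ continuously differentiable, J : Ω̄ → ℝ continuous, and let C̃ : Ω̄ → ((Fin 3)⁴ → ℝ) be a continuous fourth-order-tensor field. Define the parametric gradients Gᵢ(ξ̄, t) = (∂₁Sᵢ(ξ̄)Tᵢ(t), ∂₂Sᵢ(ξ̄)Tᵢ(t), Sᵢ(ξ̄)Tᵢ′(t)) ∈ ℝ³ and Gⱼ analogously, and for α, β ∈ Fin 3 write C̃_{αβ}(ξ̄) := C̃(ξ̄){e_α, e_β} ∈ ℝ^{3×3}. Then ∫_{Ω̄×h} C̃(ξ̄){Gᵢ(ξ̄,t), Gⱼ(ξ̄,t)} J(ξ̄) d(ξ̄,t) = P₁₁ Q₁₁ + P₁₂ Q₁₂ + P₂₁ Q₂₁ + P₂₂ Q₂₂, where Q₁₁ = ∫_h TᵢTⱼ, Q₁₂ = ∫_h TᵢTⱼ′,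 Q₂₁ = ∫_h Tᵢ′Tⱼ, Q₂₂ = ∫_h Tᵢ′Tⱼ′, and P₁₁ = ∫_{Ω̄} [C̃₁₁ ∂₁Sᵢ∂₁Sⱼ + C̃₁₂ ∂₁Sᵢ∂₂Sⱼ + C̃₂₁ ∂₂Sᵢ∂₁Sⱼ + C̃₂₂ ∂₂Sᵢ∂₂Sⱼ] J dξ̄, P₁₂ = ∫_{Ω̄} [C̃₁₃ ∂₁Sᵢ + C̃₂₃ ∂₂Sᵢ] Sⱼ J dξ̄, P₂₁ = ∫_{Ω̄} [C̃₃₁ ∂₁Sⱼ + C̃₃₂ ∂₂Sⱼ] Sᵢ J dξ̄, P₂₂ = ∫_{Ω̄} C̃₃₃ Sᵢ Sⱼ J dξ̄. -/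
/-! The parametric gradients are separated, `Gᵢ = (∂₁Sᵢ Tᵢ, ∂₂Sᵢ Tᵢ, Sᵢ Tᵢ′)`, so bilinearity of
the bracket splits the integrand into four terms `q(t) • P(ξ̄)`, where `q` is one of `TᵢTⱼ`,
`TᵢTⱼ′`, `Tᵢ′Tⱼ`, `Tᵢ′Tⱼ′`. By Fubini each term integrates over `Ω̄ × h` to `(∫_h q) • ∫_Ω̄ P`,
and the integral is additive over the four terms because each is continuous on the compact
set `Ω̄ × h`. -/

open MeasureTheory Matrix

/-- The bracket contraction `C{b,d}` of a fourth-order tensor with two vectors: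
`(C{b,d})_{ik} = Σ_{j,l} C_{ijkl} b_j d_l`. -/
def bracket (C : Fin 3 → Fin 3 → Fin 3 → Fin 3 → ℝ) (b d : Fin 3 → ℝ) :
    Matrix (Fin 3) (Fin 3) ℝ :=
  Matrix.of fun i k => ∑ j, ∑ l, C i j k l * b j * d l

lemma bracket_single_single (C : Fin 3 → Fin 3 → Fin 3 → Fin 3 → ℝ) (a b : Fin 3) :
    bracket C (Pi.single a 1) (Pi.single b 1) = of fun i k => C i a k b := by
  ext i k
  simp [bracket, Pi.single_apply]

@[fun_prop]
lemma ContinuousOn.bracket {X : Type*} [TopologicalSpace X]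
    {C : X → Fin 3 → Fin 3 → Fin 3 → Fin 3 → ℝ} {b d : X → Fin 3 → ℝ} {s : Set X}
    (hC : ContinuousOn C s) (hb : ContinuousOn b s) (hd : ContinuousOn d s) :
    ContinuousOn (fun x => bracket (C x) (b x) (d x)) s := by
  unfold _root_.bracket
  fun_prop

lemma bracket_separated (C : Fin 3 → Fin 3 → Fin 3 → Fin 3 → ℝ)
    (a₁ a₂ s τ τ' b₁ b₂ r σ σ' : ℝ) :
    bracket C ![a₁ * τ, a₂ * τ, s * τ'] ![b₁ * σ, b₂ * σ, r * σ'] =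
      (τ * σ) • ((a₁ * b₁) • bracket C (Pi.single 0 1) (Pi.single 0 1)
          + (a₁ * b₂) • bracket C (Pi.single 0 1) (Pi.single 1 1)
          + (a₂ * b₁) • bracket C (Pi.single 1 1) (Pi.single 0 1)
          + (a₂ * b₂) • bracket C (Pi.single 1 1) (Pi.single 1 1))
        + (τ * σ') • ((a₁ * r) • bracket C (Pi.single 0 1) (Pi.single 2 1)
          + (a₂ * r) • bracket C (Pi.single 1 1) (Pi.single 2 1))
        + (τ' * σ) • ((b₁ * s) • bracket C (Pi.single 2 1) (Pi.single 0 1)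
          + (b₂ * s) • bracket C (Pi.single 2 1) (Pi.single 1 1))
        + (τ' * σ') • ((s * r) • bracket C (Pi.single 2 1) (Pi.single 2 1)) := by
  ext i k
  simp only [bracket_single_single]
  simp only [bracket, of_apply, Matrix.add_apply, Matrix.smul_apply, smul_eq_mul,
    Fin.sum_univ_three, cons_val_zero, cons_val_one, cons_val_two, head_cons, tail_cons]
  ring

section MatInt

variable {α β : Type*} [MeasurableSpace α] [MeasurableSpace β] {n m : Type*}

def MatIntegrable (μ : Measure α) (f : α → Matrix n m ℝ) : Prop :=
  ∀ i j, Integrable (fun x => f x i j) μ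

lemma matInt_add {μ : Measure α} {f g : α → Matrix n m ℝ} (hf : MatIntegrable μ f)
    (hg : MatIntegrable μ g) : matInt μ (fun x => f x + g x) = matInt μ f + matInt μ g := by
  ext i j
  exact integral_add (hf i j) (hg i j)

lemma matInt_prod_smul (μ : Measure α) (ν : Measure β) [SFinite μ] [SFinite ν]
    (F : α → Matrix n m ℝ) (g : β → ℝ) :
    matInt (μ.prod ν) (fun p => g p.2 • F p.1) = (∫ y, g y ∂ν) • matInt μ F := by
  ext i j
  simp only [matInt, of_apply, Matrix.smul_apply, smul_eq_mul]
  simp_rw [mul_comm (g _)]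
  rw [integral_prod_mul (fun x => F x i j) g, mul_comm]

lemma ContinuousOn.matIntegrable_restrict [TopologicalSpace α] [T2Space α]
    [OpensMeasurableSpace α] {μ : Measure α} [IsFiniteMeasureOnCompacts μ]
    {f : α → Matrix n m ℝ} {s : Set α}
    (hf : ContinuousOn f s) (hs : IsCompact s) : MatIntegrable (μ.restrict s) f := fun i j =>
  ((continuous_id.matrix_elem i j).comp_continuousOn hf).integrableOn_compact hs

end MatInt

theorem bracket_stiffness_factorization_one_layer_general
    (t₀ t₁ : ℝ)
    (Si Sj : ℝ × ℝ → ℝ) (hSi : ContDiff ℝ 1 Si) (hSj : ContDiff ℝ 1 Sj)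
    (Ti Tj : ℝ → ℝ) (hTi : ContDiff ℝ 1 Ti) (hTj : ContDiff ℝ 1 Tj)
    (J : ℝ × ℝ → ℝ) (hJ : ContinuousOn J inPlaneSq)
    (Ct : ℝ × ℝ → Fin 3 → Fin 3 → Fin 3 → Fin 3 → ℝ) (hCt : ContinuousOn Ct inPlaneSq) :
    matInt (volume.restrict (inPlaneSq ×ˢ Set.Icc t₀ t₁))
        (fun p => J p.1 • bracket (Ct p.1)
          ![fderiv ℝ Si p.1 (1, 0) * Ti p.2, fderiv ℝ Si p.1 (0, 1) * Ti p.2,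
            Si p.1 * deriv Ti p.2]
          ![fderiv ℝ Sj p.1 (1, 0) * Tj p.2, fderiv ℝ Sj p.1 (0, 1) * Tj p.2,
            Sj p.1 * deriv Tj p.2])
      = (∫ t in Set.Icc t₀ t₁, Ti t * Tj t) •
          matInt (volume.restrict inPlaneSq) (fun ξ => J ξ •
            ((fderiv ℝ Si ξ (1, 0) * fderiv ℝ Sj ξ (1, 0)) •
                bracket (Ct ξ) (Pi.single 0 1) (Pi.single 0 1)
              + (fderiv ℝ Si ξ (1, 0) * fderiv ℝ Sj ξ (0, 1)) •
                bracket (Ct ξ) (Pi.single 0 1) (Pi.single 1 1)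
              + (fderiv ℝ Si ξ (0, 1) * fderiv ℝ Sj ξ (1, 0)) •
                bracket (Ct ξ) (Pi.single 1 1) (Pi.single 0 1)
              + (fderiv ℝ Si ξ (0, 1) * fderiv ℝ Sj ξ (0, 1)) •
                bracket (Ct ξ) (Pi.single 1 1) (Pi.single 1 1)))
        + (∫ t in Set.Icc t₀ t₁, Ti t * deriv Tj t) •
          matInt (volume.restrict inPlaneSq) (fun ξ => J ξ •
            ((fderiv ℝ Si ξ (1, 0) * Sj ξ) • bracket (Ct ξ) (Pi.single 0 1) (Pi.single 2 1)
              + (fderiv ℝ Si ξ (0, 1) * Sj ξ) • bracket (Ct ξ) (Pi.single 1 1) (Pi.single 2 1)))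
        + (∫ t in Set.Icc t₀ t₁, deriv Ti t * Tj t) •
          matInt (volume.restrict inPlaneSq) (fun ξ => J ξ •
            ((fderiv ℝ Sj ξ (1, 0) * Si ξ) • bracket (Ct ξ) (Pi.single 2 1) (Pi.single 0 1)
              + (fderiv ℝ Sj ξ (0, 1) * Si ξ) • bracket (Ct ξ) (Pi.single 2 1) (Pi.single 1 1)))
        + (∫ t in Set.Icc t₀ t₁, deriv Ti t * deriv Tj t) •
          matInt (volume.restrict inPlaneSq) (fun ξ => J ξ •
            ((Si ξ * Sj ξ) • bracket (Ct ξ) (Pi.single 2 1) (Pi.single 2 1))) := by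
  have hSI : IsCompact (inPlaneSq ×ˢ Set.Icc t₀ t₁) :=
    (isCompact_Icc.prod isCompact_Icc).prod isCompact_Icc
  have hDSi := hSi.continuous_fderiv one_ne_zero
  have hDSj := hSj.continuous_fderiv one_ne_zero
  have hDTi := hTi.continuous_deriv le_rfl
  have hDTj := hTj.continuous_deriv le_rfl
  have hSi' := hSi.continuous
  have hSj' := hSj.continuous
  have hTi' := hTi.continuous
  have hTj' := hTj.continuous
  -- read each `(∫_h q) • matInt P` on the right as an integral over `Ω̄ × h`
  simp only [← matInt_prod_smul, Measure.prod_restrict, ← Measure.volume_eq_prod]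
  rw [← matInt_add, ← matInt_add, ← matInt_add]
  · congr 1
    funext p
    rw [bracket_separated]
    module
  all_goals
    exact ContinuousOn.matIntegrable_restrict
      (by fun_prop (disch := exact Set.mapsTo_fst_prod)) hSI

/-- Per-layer factorization of the stiffness integral in bracket ('B-free') form:
with parametric gradients `Gᵢ(ξ̄,t) = (∂₁Sᵢ Tᵢ, ∂₂Sᵢ Tᵢ, Sᵢ Tᵢ′)` and the 3×3 matrices
`C̃_{αβ} = C̃{e_α, e_β}`, the 3D integral `∫ C̃{Gᵢ, Gⱼ} J` over `Ω̄ × [t₀,t₁]` equals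
`P₁₁Q₁₁ + P₁₂Q₁₂ + P₂₁Q₂₁ + P₂₂Q₂₂` with the stated 2D matrices `P` and 1D scalars `Q`. -/
theorem bracket_stiffness_factorization_one_layer
    (t₀ t₁ : ℝ) (ht : t₀ < t₁)
    (Si Sj : ℝ × ℝ → ℝ) (hSi : ContDiff ℝ 1 Si) (hSj : ContDiff ℝ 1 Sj)
    (Ti Tj : ℝ → ℝ) (hTi : ContDiff ℝ 1 Ti) (hTj : ContDiff ℝ 1 Tj)
    (J : ℝ × ℝ → ℝ) (hJ : ContinuousOn J inPlaneSq)
    (Ct : ℝ × ℝ → Fin 3 → Fin 3 → Fin 3 → Fin 3 → ℝ) (hCt : ContinuousOn Ct inPlaneSq) :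
    matInt (volume.restrict (inPlaneSq ×ˢ Set.Icc t₀ t₁))
        (fun p => J p.1 • bracket (Ct p.1)
          ![fderiv ℝ Si p.1 (1, 0) * Ti p.2, fderiv ℝ Si p.1 (0, 1) * Ti p.2,
            Si p.1 * deriv Ti p.2]
          ![fderiv ℝ Sj p.1 (1, 0) * Tj p.2, fderiv ℝ Sj p.1 (0, 1) * Tj p.2,
            Sj p.1 * deriv Tj p.2])
      = (∫ t in Set.Icc t₀ t₁, Ti t * Tj t) •
          matInt (volume.restrict inPlaneSq) (fun ξ => J ξ •
            ((fderiv ℝ Si ξ (1, 0) * fderiv ℝ Sj ξ (1, 0)) •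
                bracket (Ct ξ) (Pi.single 0 1) (Pi.single 0 1)
              + (fderiv ℝ Si ξ (1, 0) * fderiv ℝ Sj ξ (0, 1)) •
                bracket (Ct ξ) (Pi.single 0 1) (Pi.single 1 1)
              + (fderiv ℝ Si ξ (0, 1) * fderiv ℝ Sj ξ (1, 0)) •
                bracket (Ct ξ) (Pi.single 1 1) (Pi.single 0 1)
              + (fderiv ℝ Si ξ (0, 1) * fderiv ℝ Sj ξ (0, 1)) •
                bracket (Ct ξ) (Pi.single 1 1) (Pi.single 1 1)))
        + (∫ t in Set.Icc t₀ t₁, Ti t * deriv Tj t) •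
          matInt (volume.restrict inPlaneSq) (fun ξ => J ξ •
            ((fderiv ℝ Si ξ (1, 0) * Sj ξ) • bracket (Ct ξ) (Pi.single 0 1) (Pi.single 2 1)
              + (fderiv ℝ Si ξ (0, 1) * Sj ξ) • bracket (Ct ξ) (Pi.single 1 1) (Pi.single 2 1)))
        + (∫ t in Set.Icc t₀ t₁, deriv Ti t * Tj t) •
          matInt (volume.restrict inPlaneSq) (fun ξ => J ξ •
            ((fderiv ℝ Sj ξ (1, 0) * Si ξ) • bracket (Ct ξ) (Pi.single 2 1) (Pi.single 0 1)
              + (fderiv ℝ Sj ξ (0, 1) * Si ξ) • bracket (Ct ξ) (Pi.single 2 1) (Pi.single 1 1)))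
        + (∫ t in Set.Icc t₀ t₁, deriv Ti t * deriv Tj t) •
          matInt (volume.restrict inPlaneSq) (fun ξ => J ξ •
            ((Si ξ * Sj ξ) • bracket (Ct ξ) (Pi.single 2 1) (Pi.single 2 1))) :=
  bracket_stiffness_factorization_one_layer_general t₀ t₁ Si Sj hSi hSj Ti Tj hTi hTj J hJ Ct hCt
end
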